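/- arXiv:1406.5940 — 2 statements merged into one kernel-verified Lean document; each statement's English description precedes it below -/
import Mathlib

section
/- Let M(U, τ) be a special Moufang set with U abelian, and let V ≤ U be a root subgroup whose induced Moufang subset is isomorphic to the projective Moufang set M(F) of a finite field F. Then the group H₀ = ⟨μ_a μ_b : a, b ∈ V^#⟩ acts faithfully on V and is cyclic, isomorphic to the group of squares (F*)². -/
/-!
In the coordinate `V ≅ F`, `μ_a` is `x ↦ -x⁻¹`. In a special Moufang set every `μ_v` is determined
by `μ_a`, and the computation shows that `μ_r` acts on `V` as `x ↦ -r²/x`; so `μ_r μ_q` acts as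
multiplication by `(r/q)²`, giving a homomorphism `θ : H₀ → F^×` onto the squares. An element of its
kernel fixes `V` pointwise, hence commutes with every `μ_v`, so the kernel is central; the image
being cyclic, `H₀` is abelian. Conjugating by `μ_s μ_1` then gives `μ_{s²r} μ_{s²q} = μ_r μ_q`, and since
the squares have index at most `2` in `F^×`, every product `μ_x μ_y μ_z` collapses to a single
`μ_c`. Hence every element of `H₀` is some `μ_r μ_q`, which fixes `V` only if `r = ±q`, that is,
only if it is `1`: `θ` is injective.
-/

variable {U : Type*}

/-- The translation `α_a` on `X = U ∪ {∞}`, where `none` plays the role of the point `∞`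
and `some 0` plays the role of the point `0`. -/
def alphaPerm [AddGroup U] (a : U) : Equiv.Perm (Option U) :=
  Equiv.optionCongr (Equiv.addRight a)

/-- The image in `U` of the point `a ∈ U ⊆ X = U ∪ {∞}` under a permutation of `X`
(defaulting to `0` in the degenerate case where the image is `∞`). -/
def pact [Zero U] (g : Equiv.Perm (Option U)) (a : U) : U := (g (some a)).getD 0

/-- A Moufang set `M(U, τ)` in the algebraic description of De Medts–Segev:
the set is `X = U ∪ {∞}` (modelled by `Option U`), the root group at `∞` is
`U_∞ = {α_a | a ∈ U}`, the root group at `0` is `U_0 = U_∞^τ` (here written with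
Lean's left-composition convention, so `α_g^τ = τ * α_g * τ⁻¹`), for `a ≠ 0` the map
`μ a` is the unique element of the double coset `U_0 · α_a · U_0` interchanging
`0` and `∞`, and the Moufang condition holds: conjugation by `μ a` interchanges
the root groups `U_∞` and `U_0`. -/
structure MoufangSet (U : Type*) [AddGroup U] where
  τ : Equiv.Perm (Option U)
  τ_inf : τ none = some 0
  τ_zero : τ (some 0) = none
  μ : U → Equiv.Perm (Option U)
  μ_mem : ∀ a : U, a ≠ 0 → ∃ g h : U,
    μ a = (τ * alphaPerm g * τ⁻¹) * alphaPerm a * (τ * alphaPerm h * τ⁻¹)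
  μ_inf : ∀ a : U, a ≠ 0 → μ a none = some 0
  μ_zero : ∀ a : U, a ≠ 0 → μ a (some 0) = none
  μ_unique : ∀ a : U, a ≠ 0 → ∀ m : Equiv.Perm (Option U),
    (∃ g h : U, m = (τ * alphaPerm g * τ⁻¹) * alphaPerm a * (τ * alphaPerm h * τ⁻¹)) →
    m none = some 0 → m (some 0) = none → m = μ a
  moufang₁ : ∀ a : U, a ≠ 0 → ∀ b : U, ∃ c : U,
    μ a * alphaPerm b * (μ a)⁻¹ = τ * alphaPerm c * τ⁻¹
  moufang₂ : ∀ a : U, a ≠ 0 → ∀ b : U, ∃ c : U,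
    μ a * (τ * alphaPerm b * τ⁻¹) * (μ a)⁻¹ = alphaPerm c

namespace MoufangSet

variable [AddGroup U] (M : MoufangSet U)

/-- The Hua group of `M(U, τ)`: the subgroup generated by the Hua maps `h_a = τ μ_a`
(right-action convention: apply `τ` first, then `μ_a`; with Lean's left-composition
convention this is `μ_a * τ`). -/
def huaGroup : Subgroup (Equiv.Perm (Option U)) :=
  Subgroup.closure {g | ∃ a : U, a ≠ 0 ∧ g = M.μ a * M.τ}

/-- A Moufang set `M(U, τ)` is special if `(−a)τ = −(aτ)` for all nontrivial `a ∈ U`. -/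
def Special : Prop := ∀ a : U, a ≠ 0 → pact M.τ (-a) = -(pact M.τ a)

open Classical in
/-- The Hua map `h_a` of `a ∈ U`, as a map `U → U` (`x ↦ x h_a`, i.e. apply `τ` then
`μ_a` to the point `x`), with `h_0` defined to be the constant zero map. -/
noncomputable def hmap (a x : U) : U := if a = 0 then 0 else pact (M.μ a * M.τ) x

/-- The endomorphism `h_{a,b} : x ↦ x h_{a+b} − x h_a − x h_b`. -/
noncomputable def hmap₂ (a b x : U) : U := M.hmap (a + b) x - M.hmap a x - M.hmap b x

end MoufangSet

lemma FiniteField.isSquare_mul_of_not_isSquare {F : Type*} [Field F] [Finite F] {a b : F}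
    (ha : ¬IsSquare a) (hb : ¬IsSquare b) : IsSquare (a * b) := by
  classical
  have := Fintype.ofFinite F
  have ha0 : a ≠ 0 := by rintro rfl; exact ha IsSquare.zero
  have hb0 : b ≠ 0 := by rintro rfl; exact hb IsSquare.zero
  rw [← quadraticChar_one_iff_isSquare (mul_ne_zero ha0 hb0), map_mul,
    quadraticChar_neg_one_iff_not_isSquare.mpr ha, quadraticChar_neg_one_iff_not_isSquare.mpr hb]
  norm_num

lemma FiniteField.isSquare_div_of_not_isSquare {F : Type*} [Field F] [Finite F] {a b : F}
    (ha : ¬IsSquare a) (hb : ¬IsSquare b) : IsSquare (a / b) := by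
  have hb0 : b ≠ 0 := by rintro rfl; exact hb IsSquare.zero
  have h := (FiniteField.isSquare_mul_of_not_isSquare ha hb).div (IsSquare.sq b)
  rwa [pow_two, mul_div_mul_right a b hb0] at h

lemma exists_eq_sq_mul_of_isSquare_div {F : Type*} [Field F] {a b : F} (ha : a ≠ 0) (hb : b ≠ 0)
    (h : IsSquare (a / b)) : ∃ s ≠ 0, a = s ^ 2 * b := by
  obtain ⟨s, hs⟩ := h
  refine ⟨s, ?_, ?_⟩
  · rintro rfl
    exact div_ne_zero ha hb (by simpa using hs)
  · rw [div_eq_iff hb] at hs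
    rw [hs]; ring

section Translations
variable [AddGroup U]

@[simp] lemma alphaPerm_some (a u : U) : alphaPerm a (some u) = some (u + a) := rfl

@[simp] lemma alphaPerm_none (a : U) : alphaPerm a none = none := rfl

lemma alphaPerm_mul (a b : U) : alphaPerm a * alphaPerm b = alphaPerm (b + a) := by
  ext u : 1
  cases u <;> simp [add_assoc]

@[simp] lemma alphaPerm_zero : alphaPerm (0 : U) = 1 := by
  ext u : 1
  cases u <;> simp

@[simp] lemma alphaPerm_inv (a : U) : (alphaPerm a)⁻¹ = alphaPerm (-a) := by
  rw [inv_eq_iff_mul_eq_one, alphaPerm_mul, neg_add_cancel, alphaPerm_zero]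

end Translations

section PointAction
variable [Zero U]

lemma pact_eq_of_apply {g : Equiv.Perm (Option U)} {x y : U} (h : g (some x) = some y) :
    pact g x = y := by
  simp [pact, h]

lemma pact_inv_eq_of_apply {g : Equiv.Perm (Option U)} {x y : U} (h : g (some x) = some y) :
    pact g⁻¹ y = x :=
  pact_eq_of_apply (by rw [Equiv.Perm.inv_eq_iff_eq, h])

def SwapsZeroInf (g : Equiv.Perm (Option U)) : Prop := g none = some 0 ∧ g (some 0) = none

namespace SwapsZeroInf
variable {g : Equiv.Perm (Option U)} (hg : SwapsZeroInf g)
include hg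

lemma inv : SwapsZeroInf g⁻¹ :=
  ⟨by rw [Equiv.Perm.inv_eq_iff_eq, hg.2], by rw [Equiv.Perm.inv_eq_iff_eq, hg.1]⟩

lemma apply_some {x : U} (hx : x ≠ 0) : g (some x) = some (pact g x) := by
  cases h : g (some x) with
  | none => exact absurd (Option.some.inj (g.injective (h.trans hg.2.symm))) hx
  | some y => simp [pact, h]

lemma pact_ne_zero {x : U} (hx : x ≠ 0) : pact g x ≠ 0 := by
  intro h0
  have h := hg.apply_some hx
  rw [h0, ← hg.1] at h
  exact absurd (g.injective h) (Option.some_ne_none x)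

lemma pact_inv_pact {x : U} (hx : x ≠ 0) : pact g⁻¹ (pact g x) = x :=
  pact_inv_eq_of_apply (hg.apply_some hx)

lemma pact_pact_inv {x : U} (hx : x ≠ 0) : pact g (pact g⁻¹ x) = x := by
  simpa using hg.inv.pact_inv_pact hx

end SwapsZeroInf

end PointAction

namespace MoufangSet

section General
variable [AddGroup U] (M : MoufangSet U)

/-- The element `α_b^τ` of the root group `U_0`. -/
def alphaZero (b : U) : Equiv.Perm (Option U) := M.τ * alphaPerm b * M.τ⁻¹

lemma tau_swaps : SwapsZeroInf M.τ := ⟨M.τ_inf, M.τ_zero⟩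

lemma mu_swaps {c : U} (hc : c ≠ 0) : SwapsZeroInf (M.μ c) := ⟨M.μ_inf c hc, M.μ_zero c hc⟩

@[simp] lemma alphaZero_inv (b : U) : (M.alphaZero b)⁻¹ = M.alphaZero (-b) := by
  simp [alphaZero, mul_assoc]

@[simp] lemma alphaZero_none (b : U) : M.alphaZero b none = M.τ (some b) := by
  rw [alphaZero, Equiv.Perm.mul_apply, Equiv.Perm.mul_apply, M.tau_swaps.inv.1, alphaPerm_some,
    zero_add]

@[simp] lemma alphaZero_some_zero (b : U) : M.alphaZero b (some 0) = some 0 := by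
  rw [alphaZero, Equiv.Perm.mul_apply, Equiv.Perm.mul_apply, M.tau_swaps.inv.2, alphaPerm_none,
    M.τ_inf]

lemma alphaZero_some (b : U) {x : U} (hx : x ≠ 0) :
    M.alphaZero b (some x) = M.τ (some (pact M.τ⁻¹ x + b)) := by
  rw [alphaZero, Equiv.Perm.mul_apply, Equiv.Perm.mul_apply, M.tau_swaps.inv.apply_some hx,
    alphaPerm_some]

lemma mu_eq_alphaZero_mul {c : U} (hc : c ≠ 0) :
    M.μ c = M.alphaZero (-pact M.τ⁻¹ c) * alphaPerm c * M.alphaZero (pact M.τ⁻¹ (-c)) := by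
  obtain ⟨g, h, hgh⟩ := M.μ_mem c hc
  change M.μ c = M.alphaZero g * alphaPerm c * M.alphaZero h at hgh
  have hg : g = -pact M.τ⁻¹ c := by
    have e := M.μ_zero c hc
    rw [hgh, Equiv.Perm.mul_apply, Equiv.Perm.mul_apply, alphaZero_some_zero, alphaPerm_some,
      zero_add, M.alphaZero_some _ hc, ← M.τ_zero] at e
    exact eq_neg_of_add_eq_zero_right (by simpa using M.τ.injective e)
  have hh : h = pact M.τ⁻¹ (-c) := by
    have e := M.μ_inf c hc
    rw [hgh, Equiv.Perm.mul_apply, Equiv.Perm.mul_apply, alphaZero_none,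
      ← alphaZero_some_zero M g] at e
    have e' := (M.alphaZero g).injective e
    refine (pact_inv_eq_of_apply ?_).symm
    cases hτ : M.τ (some h) with
    | none => rw [hτ] at e'; simp at e'
    | some y =>
      rw [hτ, alphaPerm_some] at e'
      rw [eq_neg_of_add_eq_zero_left (Option.some.inj e')]
  rw [hgh, hg, hh]

lemma mu_mul_alphaPerm_mul_mu_inv {c b : U} (hc : c ≠ 0) (hb : b ≠ 0) :
    M.μ c * alphaPerm b * (M.μ c)⁻¹ = M.alphaZero (pact M.τ⁻¹ (pact (M.μ c) b)) := by
  obtain ⟨e, he⟩ := M.moufang₁ c hc b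
  change _ = M.alphaZero e at he
  have h : (M.μ c * alphaPerm b * (M.μ c)⁻¹) none = some (pact (M.μ c) b) := by
    rw [Equiv.Perm.mul_apply, Equiv.Perm.mul_apply, (M.mu_swaps hc).inv.1, alphaPerm_some, zero_add,
      (M.mu_swaps hc).apply_some hb]
  rw [he, alphaZero_none] at h
  rw [he, pact_inv_eq_of_apply h]

lemma mu_mul_alphaZero_mul_mu_inv {c b : U} (hc : c ≠ 0) (hb : b ≠ 0) :
    M.μ c * M.alphaZero b * (M.μ c)⁻¹ = alphaPerm (pact (M.μ c) (pact M.τ b)) := by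
  obtain ⟨e, he⟩ := M.moufang₂ c hc b
  change M.μ c * M.alphaZero b * (M.μ c)⁻¹ = alphaPerm e at he
  have h : (M.μ c * M.alphaZero b * (M.μ c)⁻¹) (some 0) = some (pact (M.μ c) (pact M.τ b)) := by
    rw [Equiv.Perm.mul_apply, Equiv.Perm.mul_apply, (M.mu_swaps hc).inv.2, alphaZero_none,
      M.tau_swaps.apply_some hb, (M.mu_swaps hc).apply_some (M.tau_swaps.pact_ne_zero hb)]
  rw [he, alphaPerm_some, zero_add] at h
  rw [he, Option.some.inj h]

/-- `α_b^{μ_c} = α^τ_{(bμ_c)τ⁻¹}` sends `(-b)μ_c` to `∞`. -/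
lemma pact_tau_inv_pact_mu_neg {c b : U} (hc : c ≠ 0) (hb : b ≠ 0) :
    pact M.τ⁻¹ (pact (M.μ c) (-b)) = -pact M.τ⁻¹ (pact (M.μ c) b) := by
  have hswap := M.mu_swaps hc
  have hnb : -b ≠ 0 := neg_ne_zero.mpr hb
  have h1 : (M.μ c)⁻¹ (some (pact (M.μ c) (-b))) = some (-b) := by
    rw [Equiv.Perm.inv_eq_iff_eq, hswap.apply_some hnb]
  have h : (M.μ c * alphaPerm b * (M.μ c)⁻¹) (some (pact (M.μ c) (-b))) = none := by
    rw [Equiv.Perm.mul_apply, Equiv.Perm.mul_apply, h1, alphaPerm_some, neg_add_cancel, hswap.2]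
  rw [M.mu_mul_alphaPerm_mul_mu_inv hc hb, M.alphaZero_some _ (hswap.pact_ne_zero hnb),
    ← M.τ_zero] at h
  exact eq_neg_of_add_eq_zero_left (Option.some.inj (M.τ.injective h))

end General

namespace Special

variable [AddGroup U] {M : MoufangSet U} (hM : M.Special)
include hM

lemma pact_tau_inv_neg {x : U} (hx : x ≠ 0) : pact M.τ⁻¹ (-x) = -pact M.τ⁻¹ x := by
  have hp := M.tau_swaps.inv.pact_ne_zero hx
  apply pact_inv_eq_of_apply
  rw [M.tau_swaps.apply_some (neg_ne_zero.mpr hp), hM _ hp, M.tau_swaps.pact_pact_inv hx]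

lemma mu_eq_alphaZero_mul {c : U} (hc : c ≠ 0) :
    M.μ c = M.alphaZero (-pact M.τ⁻¹ c) * alphaPerm c * M.alphaZero (-pact M.τ⁻¹ c) := by
  rw [M.mu_eq_alphaZero_mul hc, hM.pact_tau_inv_neg hc]

lemma mu_apply_self {c : U} (hc : c ≠ 0) : M.μ c (some c) = some (-c) := by
  have hp := M.tau_swaps.inv.pact_ne_zero hc
  rw [hM.mu_eq_alphaZero_mul hc, Equiv.Perm.mul_apply, Equiv.Perm.mul_apply, M.alphaZero_some _ hc,
    add_neg_cancel, M.τ_zero, alphaPerm_none, alphaZero_none,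
    M.tau_swaps.apply_some (neg_ne_zero.mpr hp), hM _ hp, M.tau_swaps.pact_pact_inv hc]

lemma mu_inv {c : U} (hc : c ≠ 0) : (M.μ c)⁻¹ = M.μ (-c) := by
  rw [hM.mu_eq_alphaZero_mul hc, hM.mu_eq_alphaZero_mul (neg_ne_zero.mpr hc),
    hM.pact_tau_inv_neg hc, neg_neg]
  simp only [mul_inv_rev, alphaZero_inv, alphaPerm_inv, neg_neg, mul_assoc]

lemma pact_mu_neg {c b : U} (hc : c ≠ 0) (hb : b ≠ 0) :
    pact (M.μ c) (-b) = -pact (M.μ c) b := by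
  have hmu := M.mu_swaps hc
  have h := congrArg (pact M.τ) (M.pact_tau_inv_pact_mu_neg hc hb)
  rwa [hM _ (M.tau_swaps.inv.pact_ne_zero (hmu.pact_ne_zero hb)),
    M.tau_swaps.pact_pact_inv (hmu.pact_ne_zero (neg_ne_zero.mpr hb)),
    M.tau_swaps.pact_pact_inv (hmu.pact_ne_zero hb)] at h

end Special

section NegPerm
variable [AddCommGroup U]

def negPerm : Equiv.Perm (Option U) := Equiv.optionCongr (Equiv.neg U)

@[simp] lemma negPerm_some (x : U) : negPerm (some x) = some (-x) := rfl

@[simp] lemma negPerm_none : (negPerm : Equiv.Perm (Option U)) none = none := rfl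

lemma negPerm_mul_negPerm_mul (g : Equiv.Perm (Option U)) : negPerm * (negPerm * g) = g := by
  ext x : 1
  cases h : g x <;> simp [h]

lemma negPerm_mul_alphaPerm_mul_negPerm (a : U) :
    negPerm * alphaPerm a * negPerm = alphaPerm (-a) := by
  ext x : 1
  cases x <;> simp [add_comm]

end NegPerm

namespace Special

variable [AddCommGroup U] {M : MoufangSet U} (hM : M.Special)
include hM

lemma commute_negPerm_tau : Commute negPerm M.τ := by
  ext x : 1
  rcases x with _ | x
  · simp [M.τ_inf]
  · rcases eq_or_ne x 0 with rfl | hx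
    · simp [M.τ_zero]
    · simp [M.tau_swaps.apply_some hx, M.tau_swaps.apply_some (neg_ne_zero.mpr hx), hM x hx]

lemma negPerm_mul_alphaZero_mul_negPerm (b : U) :
    negPerm * M.alphaZero b * negPerm = M.alphaZero (-b) := by
  have hτ := hM.commute_negPerm_tau
  calc negPerm * (M.τ * alphaPerm b * M.τ⁻¹) * negPerm
      = (negPerm * M.τ) * alphaPerm b * (M.τ⁻¹ * negPerm) := by simp only [mul_assoc]
    _ = M.τ * (negPerm * alphaPerm b * negPerm) * M.τ⁻¹ := by
      rw [hτ.eq, ← hτ.inv_right.eq]; simp only [mul_assoc]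
    _ = M.alphaZero (-b) := by rw [negPerm_mul_alphaPerm_mul_negPerm]; rfl

/-- `μ_c` commutes with `x ↦ -x`, while conjugating its decomposition by `x ↦ -x` gives `μ_{-c}`. -/
lemma mu_neg {c : U} (hc : c ≠ 0) : M.μ (-c) = M.μ c := by
  have hconj : negPerm * M.μ c * negPerm = M.μ (-c) := by
    rw [hM.mu_eq_alphaZero_mul hc, hM.mu_eq_alphaZero_mul (neg_ne_zero.mpr hc),
      hM.pact_tau_inv_neg hc, neg_neg]
    calc negPerm * (M.alphaZero (-pact M.τ⁻¹ c) * alphaPerm c * M.alphaZero (-pact M.τ⁻¹ c)) *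
          negPerm
        = (negPerm * M.alphaZero (-pact M.τ⁻¹ c) * negPerm) * (negPerm * alphaPerm c * negPerm) *
            (negPerm * M.alphaZero (-pact M.τ⁻¹ c) * negPerm) := by
          simp only [mul_assoc, negPerm_mul_negPerm_mul]
      _ = _ := by
          rw [hM.negPerm_mul_alphaZero_mul_negPerm, negPerm_mul_alphaPerm_mul_negPerm, neg_neg]
  have hcomm : negPerm * M.μ c * negPerm = M.μ c := by
    have hmu := M.mu_swaps hc
    ext x : 1
    rcases x with _ | x
    · simp [hmu.1]
    · rcases eq_or_ne x 0 with rfl | hx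
      · simp [hmu.2]
      · simp [hmu.apply_some hx, hmu.apply_some (neg_ne_zero.mpr hx), hM.pact_mu_neg hc hx]
  rw [← hconj, hcomm]

lemma inv_mu {c : U} (hc : c ≠ 0) : (M.μ c)⁻¹ = M.μ c := by
  rw [hM.mu_inv hc, hM.mu_neg hc]

lemma mu_mul_self {c : U} (hc : c ≠ 0) : M.μ c * M.μ c = 1 :=
  mul_eq_one_iff_eq_inv.mpr (hM.inv_mu hc).symm

lemma pact_mu_pact_mu {c x : U} (hc : c ≠ 0) (hx : x ≠ 0) :
    pact (M.μ c) (pact (M.μ c) x) = x := by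
  have h := (M.mu_swaps hc).pact_inv_pact hx
  rwa [hM.inv_mu hc] at h

lemma mu_mul_mu_mul_mu_inv {w v : U} (hw : w ≠ 0) (hv : v ≠ 0) :
    M.μ w * M.μ v * (M.μ w)⁻¹ =
      alphaPerm (-pact (M.μ w) v) * M.alphaZero (pact M.τ⁻¹ (pact (M.μ w) v)) *
        alphaPerm (-pact (M.μ w) v) := by
  have hp := M.tau_swaps.inv.pact_ne_zero hv
  have hconj := M.mu_mul_alphaZero_mul_mu_inv hw (neg_ne_zero.mpr hp)
  rw [hM _ hp, M.tau_swaps.pact_pact_inv hv, hM.pact_mu_neg hw hv] at hconj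
  calc M.μ w * M.μ v * (M.μ w)⁻¹
      = (M.μ w * M.alphaZero (-pact M.τ⁻¹ v) * (M.μ w)⁻¹) * (M.μ w * alphaPerm v * (M.μ w)⁻¹) *
          (M.μ w * M.alphaZero (-pact M.τ⁻¹ v) * (M.μ w)⁻¹) := by
        rw [hM.mu_eq_alphaZero_mul hv]; group
    _ = _ := by rw [M.mu_mul_alphaPerm_mul_mu_inv hw hv, hconj]

lemma mu_eq_alphaPerm_mul {z : U} (hz : z ≠ 0) :
    M.μ z = alphaPerm (-z) * M.alphaZero (pact M.τ⁻¹ z) * alphaPerm (-z) := by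
  have hnz : -z ≠ 0 := neg_ne_zero.mpr hz
  have h := hM.mu_mul_mu_mul_mu_inv hnz hnz
  rw [mul_inv_cancel_right, pact_eq_of_apply (hM.mu_apply_self hnz), hM.mu_neg hz] at h
  simpa only [neg_neg] using h

lemma mu_mul_mu_mul_mu {w v : U} (hw : w ≠ 0) (hv : v ≠ 0) :
    M.μ w * M.μ v * M.μ w = M.μ (pact (M.μ w) v) := by
  calc M.μ w * M.μ v * M.μ w = M.μ w * M.μ v * (M.μ w)⁻¹ := by rw [hM.inv_mu hw]
    _ = _ := by
      rw [hM.mu_mul_mu_mul_mu_inv hw hv, ← hM.mu_eq_alphaPerm_mul ((M.mu_swaps hw).pact_ne_zero hv)]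

/-- `μ_a α_b μ_a` lies in `U_0`, so this is the uniqueness of `μ_v`. -/
lemma mu_eq_mu_mul_alphaPerm_mul_mu {a v : U} (ha : a ≠ 0) (hv : v ≠ 0) :
    M.μ v = (M.μ a * alphaPerm (-pact (M.μ a) v) * M.μ a) * alphaPerm v *
      (M.μ a * alphaPerm (-pact (M.μ a) v) * M.μ a) := by
  have hmu := M.mu_swaps ha
  set b := -pact (M.μ a) v with hb_def
  have hb : b ≠ 0 := neg_ne_zero.mpr (hmu.pact_ne_zero hv)
  have hβ : M.μ a * alphaPerm b * M.μ a = M.alphaZero (pact M.τ⁻¹ (pact (M.μ a) b)) := by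
    rw [← M.mu_mul_alphaPerm_mul_mu_inv ha hb, hM.inv_mu ha]
  have hβ0 : (M.μ a * alphaPerm b * M.μ a) (some 0) = some 0 := by
    simp [hmu.1, hmu.2]
  have hβinf : (M.μ a * alphaPerm b * M.μ a) none = some (-v) := by
    rw [Equiv.Perm.mul_apply, Equiv.Perm.mul_apply, hmu.1, alphaPerm_some, zero_add,
      hmu.apply_some hb, hb_def, hM.pact_mu_neg ha (hmu.pact_ne_zero hv), hM.pact_mu_pact_mu ha hv]
  have hβv : (M.μ a * alphaPerm b * M.μ a) (some v) = none := by
    simp only [Equiv.Perm.mul_apply, hmu.apply_some hv, alphaPerm_some, hb_def, add_neg_cancel,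
      hmu.2]
  refine (M.μ_unique v hv _ ⟨_, _, by rw [hβ]; rfl⟩ ?_ ?_).symm
  · simp only [Equiv.Perm.mul_apply] at hβ0 hβinf ⊢
    rw [hβinf, alphaPerm_some, neg_add_cancel, hβ0]
  · simp only [Equiv.Perm.mul_apply] at hβ0 hβv ⊢
    rw [hβ0, alphaPerm_some, zero_add, hβv]

end Special

/-- A root subgroup `V = coord(F)` with base point `base`, on which `μ_base` reads `x ↦ -x⁻¹` in the
coordinate `coord`; so the induced Moufang set `M(V, μ_base)` is `M(F)`. -/
structure ProjectiveRootSubgroup [AddGroup U] (M : MoufangSet U) (F : Type*) [Field F] where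
  coord : F →+ U
  coord_injective : Function.Injective coord
  base : U
  base_ne_zero : base ≠ 0
  mu_base_coord : ∀ s : F, s ≠ 0 → M.μ base (some (coord s)) = some (coord (-s⁻¹))

namespace ProjectiveRootSubgroup

variable [AddCommGroup U] {M : MoufangSet U} {F : Type*} [Field F]
  (P : M.ProjectiveRootSubgroup F)

lemma coord_ne_zero {s : F} (hs : s ≠ 0) : P.coord s ≠ 0 :=
  fun h => hs (P.coord_injective (h.trans (map_zero P.coord).symm))

@[simp] lemma alphaPerm_coord (r s : F) :
    alphaPerm (P.coord r) (some (P.coord s)) = some (P.coord (s + r)) := by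
  simp [map_add]

lemma mu_base_mul_alphaPerm_mul_mu_base_apply {r y : F} (hr : r ≠ 0) (hy : y ≠ 0) (hyr : y ≠ r) :
    (M.μ P.base * alphaPerm (P.coord r⁻¹) * M.μ P.base) (some (P.coord y)) =
      some (P.coord (r * y / (r - y))) := by
  have h : -y⁻¹ + r⁻¹ ≠ 0 := fun h => hyr (inv_injective (neg_add_eq_zero.mp h))
  have hry : r - y ≠ 0 := sub_ne_zero.mpr hyr.symm
  rw [Equiv.Perm.mul_apply, Equiv.Perm.mul_apply, P.mu_base_coord y hy, alphaPerm_coord,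
    P.mu_base_coord _ h]
  have hinv : -y⁻¹ + r⁻¹ = (y - r) / (r * y) := by field_simp; ring
  have key : -(-y⁻¹ + r⁻¹)⁻¹ = r * y / (r - y) := by
    rw [hinv, inv_div, ← neg_div, div_eq_div_iff (sub_ne_zero.mpr hyr) hry]
    ring
  rw [key]

section Special
variable (hM : M.Special)
include hM

lemma mu_coord_apply {r s : F} (hr : r ≠ 0) (hs : s ≠ 0) :
    M.μ (P.coord r) (some (P.coord s)) = some (P.coord (-(r ^ 2 / s))) := by
  rcases eq_or_ne s r with rfl | hsr
  · rw [hM.mu_apply_self (P.coord_ne_zero hs), ← map_neg]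
    congr 3
    field_simp
  have hβ := hM.mu_eq_mu_mul_alphaPerm_mul_mu P.base_ne_zero (P.coord_ne_zero hr)
  rw [pact_eq_of_apply (P.mu_base_coord r hr), ← map_neg, neg_neg] at hβ
  have hrs : r - s ≠ 0 := sub_ne_zero.mpr hsr.symm
  have hy : r * s / (r - s) + r = r ^ 2 / (r - s) := by field_simp; ring
  have hy0 : r ^ 2 / (r - s) ≠ 0 := div_ne_zero (pow_ne_zero 2 hr) hrs
  have hyr : r ^ 2 / (r - s) ≠ r := by
    rw [Ne, div_eq_iff hrs]
    intro h
    exact hs (by simpa [hr] using (by linear_combination h : r * s = 0))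
  rw [hβ, Equiv.Perm.mul_apply, Equiv.Perm.mul_apply,
    P.mu_base_mul_alphaPerm_mul_mu_base_apply hr hs hsr, alphaPerm_coord, hy,
    P.mu_base_mul_alphaPerm_mul_mu_base_apply hr hy0 hyr]
  have hden : r - r ^ 2 / (r - s) = -(r * s) / (r - s) := by field_simp; ring
  rw [hden]
  field_simp

lemma mu_coord_neg {r : F} (hr : r ≠ 0) : M.μ (P.coord (-r)) = M.μ (P.coord r) := by
  rw [map_neg, hM.mu_neg (P.coord_ne_zero hr)]

lemma mu_coord_mul_mu_coord_mul_mu_coord {r q : F} (hr : r ≠ 0) (hq : q ≠ 0) :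
    M.μ (P.coord r) * M.μ (P.coord q) * M.μ (P.coord r) = M.μ (P.coord (r ^ 2 / q)) := by
  rw [hM.mu_mul_mu_mul_mu (P.coord_ne_zero hr) (P.coord_ne_zero hq),
    pact_eq_of_apply (P.mu_coord_apply hM hr hq),
    P.mu_coord_neg hM (div_ne_zero (pow_ne_zero 2 hr) hq)]

end Special

def IsDilation (g : Equiv.Perm (Option U)) (t : F) : Prop :=
  (∀ s, g (some (P.coord s)) = some (P.coord (t * s))) ∧
    ∀ s, s ≠ 0 → g * M.μ (P.coord s) * g⁻¹ = M.μ (P.coord (t * s))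

variable {P}

lemma isDilation_one : P.IsDilation 1 1 :=
  ⟨fun s => by simp, fun s _ => by simp⟩

lemma IsDilation.ne_zero {g : Equiv.Perm (Option U)} {t : F} (hg : P.IsDilation g t) : t ≠ 0 := by
  rintro rfl
  have h1 := hg.1 1
  have h0 := hg.1 0
  rw [zero_mul] at h1 h0
  exact one_ne_zero (P.coord_injective (Option.some.inj (g.injective (h1.trans h0.symm))))

lemma IsDilation.unique {g : Equiv.Perm (Option U)} {t t' : F} (hg : P.IsDilation g t)
    (hg' : P.IsDilation g t') : t = t' := by
  simpa using P.coord_injective (Option.some.inj ((hg.1 1).symm.trans (hg'.1 1)))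

lemma IsDilation.mul {g h : Equiv.Perm (Option U)} {t u : F} (hg : P.IsDilation g t)
    (hh : P.IsDilation h u) : P.IsDilation (g * h) (t * u) := by
  refine ⟨fun s => by rw [Equiv.Perm.mul_apply, hh.1, hg.1, mul_assoc], fun s hs => ?_⟩
  calc g * h * M.μ (P.coord s) * (g * h)⁻¹ = g * (h * M.μ (P.coord s) * h⁻¹) * g⁻¹ := by group
    _ = M.μ (P.coord (t * u * s)) := by
      rw [hh.2 s hs, hg.2 _ (mul_ne_zero hh.ne_zero hs), mul_assoc]

lemma IsDilation.inv {g : Equiv.Perm (Option U)} {t : F} (hg : P.IsDilation g t) :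
    P.IsDilation g⁻¹ t⁻¹ := by
  have ht := hg.ne_zero
  refine ⟨fun s => ?_, fun s hs => ?_⟩
  · rw [Equiv.Perm.inv_eq_iff_eq, hg.1, mul_inv_cancel_left₀ ht]
  · have h := hg.2 (t⁻¹ * s) (mul_ne_zero (inv_ne_zero ht) hs)
    rw [mul_inv_cancel_left₀ ht] at h
    rw [← h]
    group

variable (P)

/-- The group `H₀ = ⟨μ_r μ_q : r, q ∈ F^×⟩`. -/
def evenMuSubgroup : Subgroup (Equiv.Perm (Option U)) :=
  Subgroup.closure {g | ∃ r q : F, r ≠ 0 ∧ q ≠ 0 ∧ g = M.μ (P.coord r) * M.μ (P.coord q)}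

lemma mu_mul_mu_mem {r q : F} (hr : r ≠ 0) (hq : q ≠ 0) :
    M.μ (P.coord r) * M.μ (P.coord q) ∈ P.evenMuSubgroup :=
  Subgroup.subset_closure ⟨r, q, hr, hq, rfl⟩

section Special
variable (hM : M.Special)
include hM

lemma isDilation_mu_mul_mu {r q : F} (hr : r ≠ 0) (hq : q ≠ 0) :
    P.IsDilation (M.μ (P.coord r) * M.μ (P.coord q)) ((r / q) ^ 2) := by
  refine ⟨fun s => ?_, fun s hs => ?_⟩
  · rcases eq_or_ne s 0 with rfl | hs
    · rw [mul_zero, map_zero, Equiv.Perm.mul_apply, (M.mu_swaps (P.coord_ne_zero hq)).2,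
        (M.mu_swaps (P.coord_ne_zero hr)).1]
    have hq' : -(q ^ 2 / s) ≠ 0 := neg_ne_zero.mpr (div_ne_zero (pow_ne_zero 2 hq) hs)
    rw [Equiv.Perm.mul_apply, P.mu_coord_apply hM hq hs, P.mu_coord_apply hM hr hq']
    congr 3
    field_simp
  · calc M.μ (P.coord r) * M.μ (P.coord q) * M.μ (P.coord s) * (M.μ (P.coord r) * M.μ (P.coord q))⁻¹
        = M.μ (P.coord r) * (M.μ (P.coord q) * M.μ (P.coord s) * M.μ (P.coord q)) *
            M.μ (P.coord r) := by
          rw [mul_inv_rev, hM.inv_mu (P.coord_ne_zero hr), hM.inv_mu (P.coord_ne_zero hq)]; group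
      _ = M.μ (P.coord ((r / q) ^ 2 * s)) := by
          rw [P.mu_coord_mul_mu_coord_mul_mu_coord hM hq hs,
            P.mu_coord_mul_mu_coord_mul_mu_coord hM hr (div_ne_zero (pow_ne_zero 2 hq) hs)]
          congr 2
          field_simp

lemma exists_isDilation_of_mem {g : Equiv.Perm (Option U)} (hg : g ∈ P.evenMuSubgroup) :
    ∃ t, P.IsDilation g t := by
  induction hg using Subgroup.closure_induction with
  | mem g hg =>
    obtain ⟨r, q, hr, hq, rfl⟩ := hg
    exact ⟨_, P.isDilation_mu_mul_mu hM hr hq⟩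
  | one => exact ⟨1, isDilation_one⟩
  | mul g h _ _ hg hh =>
    obtain ⟨t, ht⟩ := hg
    obtain ⟨u, hu⟩ := hh
    exact ⟨t * u, ht.mul hu⟩
  | inv g _ hg =>
    obtain ⟨t, ht⟩ := hg
    exact ⟨t⁻¹, ht.inv⟩

noncomputable def dilationHom : P.evenMuSubgroup →* Fˣ where
  toFun g := Units.mk0 _ (P.exists_isDilation_of_mem hM g.2).choose_spec.ne_zero
  map_one' := Units.ext <|
    (P.exists_isDilation_of_mem hM (1 : P.evenMuSubgroup).2).choose_spec.unique isDilation_one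
  map_mul' g h := Units.ext <| (P.exists_isDilation_of_mem hM (g * h).2).choose_spec.unique
    ((P.exists_isDilation_of_mem hM g.2).choose_spec.mul
      (P.exists_isDilation_of_mem hM h.2).choose_spec)

lemma isDilation_dilationHom (g : P.evenMuSubgroup) :
    P.IsDilation g (P.dilationHom hM g : F) := by
  exact (P.exists_isDilation_of_mem hM g.2).choose_spec

lemma dilationHom_eq {g : P.evenMuSubgroup} {t : F} (hg : P.IsDilation g t) :
    (P.dilationHom hM g : F) = t :=
  (P.isDilation_dilationHom hM g).unique hg

/-- An element dilating by `1` fixes `V`, so it commutes with every `μ_v`, `v ∈ V`. -/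
lemma ker_dilationHom_le_center :
    (P.dilationHom hM).ker ≤ Subgroup.center P.evenMuSubgroup := by
  intro k hk
  have hk1 := P.isDilation_dilationHom hM k
  rw [(P.dilationHom hM).mem_ker.mp hk, Units.val_one] at hk1
  have hcomm : ∀ s : F, s ≠ 0 → Commute (M.μ (P.coord s)) k := fun s hs =>
    (mul_inv_eq_iff_eq_mul.mp (by rw [hk1.2 s hs, one_mul])).symm
  have hle : P.evenMuSubgroup ≤ Subgroup.centralizer {(k : Equiv.Perm (Option U))} := by
    refine (Subgroup.closure_le _).mpr ?_
    rintro _ ⟨r, q, hr, hq, rfl⟩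
    exact Subgroup.mem_centralizer_singleton_iff.mpr ((hcomm r hr).mul_left (hcomm q hq))
  exact Subgroup.mem_center_iff.mpr fun g => Subtype.ext (Subgroup.mem_centralizer_singleton_iff.mp
    (hle g.2))

variable [Finite F]

lemma mul_comm_of_mem {g h : Equiv.Perm (Option U)} (hg : g ∈ P.evenMuSubgroup)
    (hh : h ∈ P.evenMuSubgroup) : g * h = h * g := by
  have := (P.dilationHom hM).isMulCommutative_of_isCyclic_of_ker_le_center
    (P.ker_dilationHom_le_center hM)
  exact congrArg Subtype.val (this.is_comm.comm (⟨g, hg⟩ : P.evenMuSubgroup) ⟨h, hh⟩)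

/-- Conjugate by `μ_s μ_1`, which dilates by `s²` and commutes with `μ_r μ_q`. -/
lemma mu_coord_sq_mul_mul_mu_coord_sq_mul {s r q : F} (hs : s ≠ 0) (hr : r ≠ 0) (hq : q ≠ 0) :
    M.μ (P.coord (s ^ 2 * r)) * M.μ (P.coord (s ^ 2 * q)) = M.μ (P.coord r) * M.μ (P.coord q) := by
  set h := M.μ (P.coord s) * M.μ (P.coord 1)
  have hd := P.isDilation_mu_mul_mu hM hs one_ne_zero
  rw [div_one] at hd
  have hcomm := P.mul_comm_of_mem hM (P.mu_mul_mu_mem hs one_ne_zero) (P.mu_mul_mu_mem hr hq)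
  calc M.μ (P.coord (s ^ 2 * r)) * M.μ (P.coord (s ^ 2 * q))
      = (h * M.μ (P.coord r) * h⁻¹) * (h * M.μ (P.coord q) * h⁻¹) := by rw [hd.2 r hr, hd.2 q hq]
    _ = h * (M.μ (P.coord r) * M.μ (P.coord q)) * h⁻¹ := by group
    _ = M.μ (P.coord r) * M.μ (P.coord q) := by rw [hcomm, mul_inv_cancel_right]

lemma mu_mul_mu_mul_mu_sq_mul {s x y : F} (hs : s ≠ 0) (hx : x ≠ 0) (hy : y ≠ 0) :
    M.μ (P.coord x) * M.μ (P.coord y) * M.μ (P.coord (s ^ 2 * y)) =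
      M.μ (P.coord (s ^ 2 * x)) := by
  rw [← P.mu_coord_sq_mul_mul_mu_coord_sq_mul hM hs hx hy, mul_assoc,
    hM.mu_mul_self (P.coord_ne_zero (mul_ne_zero (pow_ne_zero 2 hs) hy)), mul_one]

/-- One of `x/y`, `z/y`, `z/x` is a square, since the squares have index at most `2` in `F^×`. -/
lemma exists_mu_mul_mu_mul_mu_eq {x y z : F} (hx : x ≠ 0) (hy : y ≠ 0) (hz : z ≠ 0) :
    ∃ c ≠ 0, M.μ (P.coord x) * M.μ (P.coord y) * M.μ (P.coord z) = M.μ (P.coord c) := by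
  by_cases hzy : IsSquare (z / y)
  · obtain ⟨s, hs, rfl⟩ := exists_eq_sq_mul_of_isSquare_div hz hy hzy
    exact ⟨s ^ 2 * x, mul_ne_zero (pow_ne_zero 2 hs) hx, P.mu_mul_mu_mul_mu_sq_mul hM hs hx hy⟩
  by_cases hxy : IsSquare (x / y)
  · obtain ⟨s, hs, rfl⟩ := exists_eq_sq_mul_of_isSquare_div hx hy hxy
    refine ⟨s ^ 2 * z, mul_ne_zero (pow_ne_zero 2 hs) hz, ?_⟩
    rw [mul_assoc, ← P.mu_coord_sq_mul_mul_mu_coord_sq_mul hM hs hy hz, ← mul_assoc,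
      hM.mu_mul_self (P.coord_ne_zero (mul_ne_zero (pow_ne_zero 2 hs) hy)), one_mul]
  have hzx := FiniteField.isSquare_div_of_not_isSquare hzy hxy
  rw [div_div_div_cancel_right₀ hy] at hzx
  obtain ⟨s, hs, rfl⟩ := exists_eq_sq_mul_of_isSquare_div hz hx hzx
  have hx2y : x ^ 2 / y ≠ 0 := div_ne_zero (pow_ne_zero 2 hx) hy
  refine ⟨s ^ 2 * (x ^ 2 / y), mul_ne_zero (pow_ne_zero 2 hs) hx2y, ?_⟩
  calc M.μ (P.coord x) * M.μ (P.coord y) * M.μ (P.coord (s ^ 2 * x))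
      = M.μ (P.coord x) * M.μ (P.coord y) * (M.μ (P.coord x) * M.μ (P.coord x)) *
          M.μ (P.coord (s ^ 2 * x)) := by
        rw [hM.mu_mul_self (P.coord_ne_zero hx), mul_one]
    _ = (M.μ (P.coord x) * M.μ (P.coord y) * M.μ (P.coord x)) *
          (M.μ (P.coord x) * M.μ (P.coord (s ^ 2 * x))) := by group
    _ = M.μ (P.coord (s ^ 2 * (x ^ 2 / y))) := by
        rw [P.mu_coord_mul_mu_coord_mul_mu_coord hM hx hy, ← mul_assoc,
          P.mu_mul_mu_mul_mu_sq_mul hM hs hx2y hx]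

lemma exists_eq_mu_mul_mu_of_mem {g : Equiv.Perm (Option U)} (hg : g ∈ P.evenMuSubgroup) :
    ∃ r q : F, r ≠ 0 ∧ q ≠ 0 ∧ g = M.μ (P.coord r) * M.μ (P.coord q) := by
  induction hg using Subgroup.closure_induction with
  | mem g hg => exact hg
  | one =>
    exact ⟨1, 1, one_ne_zero, one_ne_zero, (hM.mu_mul_self (P.coord_ne_zero one_ne_zero)).symm⟩
  | mul g h _ _ hg hh =>
    obtain ⟨x, y, hx, hy, rfl⟩ := hg
    obtain ⟨z, w, hz, hw, rfl⟩ := hh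
    obtain ⟨c, hc, hyzw⟩ := P.exists_mu_mul_mu_mul_mu_eq hM hy hz hw
    exact ⟨x, c, hx, hc, by rw [← hyzw]; group⟩
  | inv g _ hg =>
    obtain ⟨r, q, hr, hq, rfl⟩ := hg
    refine ⟨q, r, hq, hr, ?_⟩
    rw [mul_inv_rev, hM.inv_mu (P.coord_ne_zero hr), hM.inv_mu (P.coord_ne_zero hq)]

lemma eq_one_of_mem_of_apply_coord_one {g : Equiv.Perm (Option U)} (hg : g ∈ P.evenMuSubgroup)
    (hfix : g (some (P.coord 1)) = some (P.coord 1)) : g = 1 := by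
  obtain ⟨r, q, hr, hq, rfl⟩ := P.exists_eq_mu_mul_mu_of_mem hM hg
  have h := (P.isDilation_mu_mul_mu hM hr hq).1 1
  rw [hfix, mul_one] at h
  have hrq : (r / q) ^ 2 = 1 := (P.coord_injective (Option.some.inj h)).symm
  rcases sq_eq_one_iff.mp hrq with h1 | h1
  · rw [(div_eq_one_iff_eq hq).mp h1, hM.mu_mul_self (P.coord_ne_zero hq)]
  · rw [div_eq_iff hq, neg_one_mul] at h1
    rw [h1, P.mu_coord_neg hM hq, hM.mu_mul_self (P.coord_ne_zero hq)]

lemma dilationHom_injective : Function.Injective (P.dilationHom hM) := by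
  refine (injective_iff_map_eq_one _).mpr fun g hg => Subtype.ext ?_
  have h := (P.isDilation_dilationHom hM g).1 1
  rw [hg, Units.val_one, one_mul] at h
  exact P.eq_one_of_mem_of_apply_coord_one hM g.2 h

lemma range_dilationHom : (P.dilationHom hM).range = (powMonoidHom 2 : Fˣ →* Fˣ).range := by
  apply le_antisymm
  · rintro _ ⟨g, rfl⟩
    obtain ⟨r, q, hr, hq, hg⟩ := P.exists_eq_mu_mul_mu_of_mem hM g.2
    refine ⟨Units.mk0 (r / q) (div_ne_zero hr hq), Units.ext ?_⟩
    rw [P.dilationHom_eq hM (hg ▸ P.isDilation_mu_mul_mu hM hr hq)]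
    simp
  · rintro _ ⟨t, rfl⟩
    refine ⟨⟨_, P.mu_mul_mu_mem t.ne_zero one_ne_zero⟩, Units.ext ?_⟩
    rw [P.dilationHom_eq hM (P.isDilation_mu_mul_mu hM t.ne_zero one_ne_zero)]
    simp

noncomputable def evenMuSubgroupEquivSquares :
    P.evenMuSubgroup ≃* (powMonoidHom 2 : Fˣ →* Fˣ).range :=
  (MonoidHom.ofInjective (P.dilationHom_injective hM)).trans
    (MulEquiv.subgroupCongr (P.range_dilationHom hM))

lemma isCyclic_evenMuSubgroup : IsCyclic P.evenMuSubgroup :=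
  isCyclic_of_surjective (P.evenMuSubgroupEquivSquares hM).symm.toMonoidHom
    (P.evenMuSubgroupEquivSquares hM).symm.surjective

end Special

def ofAddEquiv (V : AddSubgroup U) (φ : V ≃+ F) {a : U} (ha : a ≠ 0)
    (hroot : ∀ v : U, v ∈ V → v ≠ 0 → pact (M.μ a) v ∈ V)
    (hφ : ∀ v w : V, (v : U) ≠ 0 → (w : U) = pact (M.μ a) (v : U) → φ w = -(φ v)⁻¹) :
    M.ProjectiveRootSubgroup F where
  coord := V.subtype.comp φ.symm.toAddMonoidHom
  coord_injective := Subtype.val_injective.comp φ.symm.injective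
  base := a
  base_ne_zero := ha
  mu_base_coord s hs := by
    have hv : (φ.symm s : U) ≠ 0 := by simpa using hs
    have hw := hφ (φ.symm s) ⟨_, hroot _ (φ.symm s).2 hv⟩ hv rfl
    rw [AddEquiv.apply_symm_apply, ← AddEquiv.eq_symm_apply] at hw
    simp only [AddMonoidHom.coe_comp, Function.comp_apply, AddEquiv.coe_toAddMonoidHom,
      AddSubgroup.coe_subtype, ← hw]
    exact (M.mu_swaps ha).apply_some hv

lemma evenMuSubgroup_ofAddEquiv (V : AddSubgroup U) (φ : V ≃+ F) {a : U} (ha : a ≠ 0)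
    (hroot : ∀ v : U, v ∈ V → v ≠ 0 → pact (M.μ a) v ∈ V)
    (hφ : ∀ v w : V, (v : U) ≠ 0 → (w : U) = pact (M.μ a) (v : U) → φ w = -(φ v)⁻¹) :
    (ofAddEquiv V φ ha hroot hφ).evenMuSubgroup = Subgroup.closure {g : Equiv.Perm (Option U) |
      ∃ b c : U, b ∈ V ∧ b ≠ 0 ∧ c ∈ V ∧ c ≠ 0 ∧ g = M.μ c * M.μ b} := by
  refine congrArg Subgroup.closure (Set.ext fun g => ⟨?_, ?_⟩)
  · rintro ⟨r, q, hr, hq, rfl⟩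
    exact ⟨_, _, (φ.symm q).2, by simpa using hq, (φ.symm r).2, by simpa using hr, rfl⟩
  · rintro ⟨b, c, hbV, hb, hcV, hc, rfl⟩
    exact ⟨φ ⟨c, hcV⟩, φ ⟨b, hbV⟩, by simpa using hc, by simpa using hb, by simp [ofAddEquiv]⟩

end ProjectiveRootSubgroup

end MoufangSet

theorem stmt_10_general [AddCommGroup U] (M : MoufangSet U) (hs : M.Special)
    {F : Type*} [Field F] [Fintype F]
    (V : AddSubgroup U) (a : U) (ha : a ≠ 0)
    (hroot : ∀ v : U, v ∈ V → v ≠ 0 → pact (M.μ a) v ∈ V)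
    (φ : V ≃+ F)
    (hφ : ∀ v w : V, (v : U) ≠ 0 → (w : U) = pact (M.μ a) (v : U) → φ w = -(φ v)⁻¹) :
    (∀ g ∈ Subgroup.closure {g : Equiv.Perm (Option U) |
        ∃ b c : U, b ∈ V ∧ b ≠ 0 ∧ c ∈ V ∧ c ≠ 0 ∧ g = M.μ c * M.μ b},
      (∀ v : U, v ∈ V → g (some v) = some v) → g = 1) ∧
    IsCyclic (Subgroup.closure {g : Equiv.Perm (Option U) |
        ∃ b c : U, b ∈ V ∧ b ≠ 0 ∧ c ∈ V ∧ c ≠ 0 ∧ g = M.μ c * M.μ b}) ∧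
    Nonempty ((Subgroup.closure {g : Equiv.Perm (Option U) |
        ∃ b c : U, b ∈ V ∧ b ≠ 0 ∧ c ∈ V ∧ c ≠ 0 ∧ g = M.μ c * M.μ b})
      ≃* (powMonoidHom 2 : Fˣ →* Fˣ).range) := by
  set P := MoufangSet.ProjectiveRootSubgroup.ofAddEquiv V φ ha hroot hφ
  rw [← MoufangSet.ProjectiveRootSubgroup.evenMuSubgroup_ofAddEquiv V φ ha hroot hφ]
  exact ⟨fun g hg hfix => P.eq_one_of_mem_of_apply_coord_one hs hg (hfix _ (φ.symm 1).2),
    P.isCyclic_evenMuSubgroup hs, ⟨P.evenMuSubgroupEquivSquares hs⟩⟩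

/-- Let `M(U, τ)` be a special Moufang set with `U` abelian, and let
`V ≤ U` be a root subgroup whose induced Moufang subset is isomorphic to the projective
Moufang set `M(F)` of a finite field `F` (i.e. there is an additive isomorphism `φ : V ≃ F`
intertwining `μ_a|_V` with `x ↦ −x⁻¹`).  Then the group `H₀ = ⟨μ_a μ_b : a, b ∈ V^#⟩`
acts faithfully on `V` and is cyclic, isomorphic to the group of squares `(F*)²`. -/
theorem stmt_10 [AddCommGroup U] (M : MoufangSet U) (hs : M.Special)
    {F : Type*} [Field F] [Fintype F]
    (V : AddSubgroup U) (a : U) (haV : a ∈ V) (ha : a ≠ 0)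
    (hroot : ∀ v : U, v ∈ V → v ≠ 0 → pact (M.μ a) v ∈ V)
    (φ : V ≃+ F)
    (hφ : ∀ v w : V, (v : U) ≠ 0 → (w : U) = pact (M.μ a) (v : U) → φ w = -(φ v)⁻¹) :
    (∀ g ∈ Subgroup.closure {g : Equiv.Perm (Option U) |
        ∃ b c : U, b ∈ V ∧ b ≠ 0 ∧ c ∈ V ∧ c ≠ 0 ∧ g = M.μ c * M.μ b},
      (∀ v : U, v ∈ V → g (some v) = some v) → g = 1) ∧
    IsCyclic (Subgroup.closure {g : Equiv.Perm (Option U) |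
        ∃ b c : U, b ∈ V ∧ b ≠ 0 ∧ c ∈ V ∧ c ≠ 0 ∧ g = M.μ c * M.μ b}) ∧
    Nonempty ((Subgroup.closure {g : Equiv.Perm (Option U) |
        ∃ b c : U, b ∈ V ∧ b ≠ 0 ∧ c ∈ V ∧ c ≠ 0 ∧ g = M.μ c * M.μ b})
      ≃* (powMonoidHom 2 : Fˣ →* Fˣ).range) :=
  stmt_10_general M hs V a ha hroot φ hφ
end

section
/- Let K be a field and q : K → End_{F₃}(F₉) a multiplicative quadratic map such that q(K*) normalizes and is normalized by the group (F₉*)² of squares (where F₉ embeds in End_{F₃}(F₉) by right multiplication). If q(K) is not contained in F₉, then K has order 9 and q(K) generates a subfield of End_{F₃}(F₉) isomorphic to F₉. -/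
instance : Fact (Nat.Prime 3) := ⟨by norm_num⟩

/-- A multiplicative quadratic map `q : K → L` between unital rings. -/
structure IsMultiplicativeQuadraticMap {K L : Type*} [Ring K] [Ring L] (q : K → L) : Prop where
  map_mul : ∀ a b : K, q (a * b) = q a * q b
  map_int : ∀ n : ℤ, q (n : K) = (n : L) ^ 2
  biadd_left : ∀ a a' b : K,
    (q (a + a' + b) - q (a + a') - q b) =
      (q (a + b) - q a - q b) + (q (a' + b) - q a' - q b)
  biadd_right : ∀ a b b' : K,
    (q (a + (b + b')) - q a - q (b + b')) =
      (q (a + b) - q a - q b) + (q (a + b') - q a - q b')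

/-- The embedding of `F₉` into `End_{F₃}(F₉)` by multiplication. -/
noncomputable def iota : GaloisField 3 2 →ₐ[ZMod 3] Module.End (ZMod 3) (GaloisField 3 2) :=
  Algebra.lmul (ZMod 3) (GaloisField 3 2)

/-!
Fix `a₀` with `t = q a₀ ∉ F₉` and `y ∈ F₉` with `y⁴ = -1`, so that `u = y²` generates `F₉`
over `F₃` and its centralizer in `End_{F₃}(F₉)` is `F₉`. Conjugation by `q a` maps `u` to a
square root of `-1` in `F₉`, i.e. to `±u`; as `t ∉ F₉`, `t` anticommutes with `u`. Hence
`q a` or `q a * t` commutes with both `u` and `t`, so lies in `F₃`; applied to `a₀` this gives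
`t² = ±1`, and then every value of `q` lies in `{0, ±1, ±t}`.

These values commute, so the rest happens in a commutative ring of characteristic `3`, where the
parallelogram law reads `q (1 + c) + q (1 - c) = -1 - q c`. Two elements of `{0, ±1, ±t}` add
up to `1` or to `-1 - t` in very few ways; this forces `t² = -1` and `a ^ 16 = 1` for `a ≠ 0`,
whence `|K| = 9`; and `t² = -1` makes the ring generated by `t` a copy of `F₃[X]/(X² + 1) ≅ F₉`.
-/

open Polynomial

namespace IsMultiplicativeQuadraticMap

section Ring

variable {K L : Type*} [Ring K] [Ring L] {q : K → L}

theorem map_zero (hq : IsMultiplicativeQuadraticMap q) : q 0 = 0 := by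
  simpa using hq.map_int 0

theorem map_one (hq : IsMultiplicativeQuadraticMap q) : q 1 = 1 := by
  simpa using hq.map_int 1

theorem map_neg_one (hq : IsMultiplicativeQuadraticMap q) : q (-1) = 1 := by
  simpa using hq.map_int (-1)

theorem map_neg (hq : IsMultiplicativeQuadraticMap q) (a : K) : q (-a) = q a := by
  rw [neg_eq_neg_one_mul, hq.map_mul, hq.map_neg_one, one_mul]

theorem map_pow (hq : IsMultiplicativeQuadraticMap q) (a : K) (n : ℕ) : q (a ^ n) = q a ^ n := by
  induction n with
  | zero => rw [pow_zero, pow_zero, hq.map_one]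
  | succ n ih => rw [pow_succ, pow_succ, hq.map_mul, ih]

theorem map_one_add_add_map_one_sub (hq : IsMultiplicativeQuadraticMap q) (c : K) :
    q (1 + c) + q (1 - c) = 2 + 2 * q c := by
  have h := hq.biadd_left c (-c) 1
  rw [add_neg_cancel, zero_add, hq.map_zero, hq.map_neg, neg_add_eq_sub, add_comm c] at h
  rw [two_mul, ← one_add_one_eq_two, ← hq.map_one]
  linear_combination (norm := noncomm_ring) -h

theorem subringCodRestrict (hq : IsMultiplicativeQuadraticMap q) (S : Subring L)
    (hS : ∀ a, q a ∈ S) : IsMultiplicativeQuadraticMap (fun a ↦ (⟨q a, hS a⟩ : S)) where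
  map_mul a b := Subtype.ext (hq.map_mul a b)
  map_int n := Subtype.ext (by simpa using hq.map_int n)
  biadd_left a a' b := Subtype.ext (hq.biadd_left a a' b)
  biadd_right a b b' := Subtype.ext (hq.biadd_right a b b')

end Ring

section DivisionRing

variable {K L : Type*} [DivisionRing K] [Ring L] {q : K → L}

theorem map_mul_map_inv (hq : IsMultiplicativeQuadraticMap q) {a : K} (ha : a ≠ 0) :
    q a * q a⁻¹ = 1 := by
  rw [← hq.map_mul, mul_inv_cancel₀ ha, hq.map_one]

theorem map_inv_mul_map (hq : IsMultiplicativeQuadraticMap q) {a : K} (ha : a ≠ 0) :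
    q a⁻¹ * q a = 1 := by
  rw [← hq.map_mul, inv_mul_cancel₀ ha, hq.map_one]

theorem eq_zero_of_map_eq_zero [Nontrivial L] (hq : IsMultiplicativeQuadraticMap q) {a : K}
    (ha : q a = 0) : a = 0 := by
  by_contra ha0
  simpa [ha] using hq.map_mul_map_inv ha0

end DivisionRing

theorem commute {K L : Type*} [CommRing K] [Ring L] {q : K → L}
    (hq : IsMultiplicativeQuadraticMap q) (a b : K) : Commute (q a) (q b) := by
  rw [Commute, SemiconjBy, ← hq.map_mul, ← hq.map_mul, mul_comm]

end IsMultiplicativeQuadraticMap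

section CharThree

variable {A : Type*} [CommRing A] [CharP A 3] {t x y : A}

theorem add_eq_one_cases (ht : t ∉ ({0, 1, -1} : Set A))
    (hx : x ∈ ({0, 1, -1, t, -t} : Set A)) (hy : y ∈ ({0, 1, -1, t, -t} : Set A))
    (h : x + y = 1) : x = 0 ∧ y = 1 ∨ x = 1 ∧ y = 0 ∨ x = -1 ∧ y = -1 := by
  have h3 : (3 : A) = 0 := CharP.cast_eq_zero A 3
  simp only [Set.mem_insert_iff, Set.mem_singleton_iff, not_or] at ht hx hy
  rcases hx with rfl | rfl | rfl | rfl | rfl <;> rcases hy with rfl | rfl | rfl | rfl | rfl <;>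
    grind

theorem add_eq_neg_one_sub_cases (ht : t ∉ ({0, 1, -1} : Set A))
    (hx : x ∈ ({0, 1, -1, t, -t} : Set A)) (hy : y ∈ ({0, 1, -1, t, -t} : Set A))
    (h : x + y = -1 - t) : x = -1 ∧ y = -t ∨ x = -t ∧ y = -1 := by
  have h3 : (3 : A) = 0 := CharP.cast_eq_zero A 3
  simp only [Set.mem_insert_iff, Set.mem_singleton_iff, not_or] at ht hx hy
  rcases hx with rfl | rfl | rfl | rfl | rfl <;> rcases hy with rfl | rfl | rfl | rfl | rfl <;>
    grind

end CharThree

namespace IsMultiplicativeQuadraticMap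

section CharThree

variable {K A : Type*} [Field K] [CommRing A] [CharP A 3] {q : K → A}

theorem map_one_add_add_map_one_sub_eq (hq : IsMultiplicativeQuadraticMap q) (c : K) :
    q (1 + c) + q (1 - c) = -1 - q c := by
  linear_combination hq.map_one_add_add_map_one_sub c + (1 + q c) * CharP.cast_eq_zero A 3

theorem map_two (hq : IsMultiplicativeQuadraticMap q) : q 2 = 1 := by
  have h := hq.map_int 2
  push_cast at h
  linear_combination h + CharP.cast_eq_zero A 3

theorem mul_self_mem_and_mem_of_mem_or_mul_mem (hq : IsMultiplicativeQuadraticMap q) {a₀ : K}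
    (ht : q a₀ ∉ ({0, 1, -1} : Set A))
    (hval : ∀ a, q a ∈ ({0, 1, -1} : Set A) ∨ q a * q a₀ ∈ ({0, 1, -1} : Set A)) :
    (q a₀ * q a₀ = 1 ∨ q a₀ * q a₀ = -1) ∧ ∀ a, q a ∈ ({0, 1, -1, q a₀, -q a₀} : Set A) := by
  have : Nontrivial A := CharP.nontrivial_of_char_ne_one (by norm_num : 3 ≠ 1)
  have ha₀ : a₀ ≠ 0 := by rintro rfl; exact ht (by simp [hq.map_zero])
  have htt : q a₀ * q a₀ = 1 ∨ q a₀ * q a₀ = -1 := by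
    have h0 : q a₀ * q a₀ ≠ 0 := by
      rw [← hq.map_mul]; exact fun h ↦ mul_ne_zero ha₀ ha₀ (hq.eq_zero_of_map_eq_zero h)
    simpa [h0] using (hval a₀).resolve_left ht
  refine ⟨htt, fun a ↦ ?_⟩
  simp only [Set.mem_insert_iff, Set.mem_singleton_iff] at hval ⊢
  rcases hval a with h | h
  · tauto
  -- `q a = (q a * q a₀) * q a₀ * (q a₀ * q a₀)`, as `(q a₀ * q a₀) ^ 2 = 1`.
  · grind

end CharThree

section Values

variable {K A : Type*} [Field K] [CommRing A] [CharP A 3] {q : K → A} {t : A}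
  (hq : IsMultiplicativeQuadraticMap q) (ht : t ∉ ({0, 1, -1} : Set A))
  (hV : ∀ a, q a ∈ ({0, 1, -1, t, -t} : Set A))
include hq ht hV

theorem eq_one_or_eq_neg_one_or_of_map_eq_one {c : K} (hc : q c = 1) :
    c = 1 ∨ c = -1 ∨ q (1 + c) = -1 ∧ q (1 - c) = -1 := by
  have : Nontrivial A := CharP.nontrivial_of_char_ne_one (by norm_num : 3 ≠ 1)
  have hsum : q (1 + c) + q (1 - c) = 1 := by
    rw [hq.map_one_add_add_map_one_sub_eq, hc]
    linear_combination -CharP.cast_eq_zero A 3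
  rcases add_eq_one_cases ht (hV _) (hV _) hsum with ⟨h, -⟩ | ⟨-, h⟩ | h
  · exact Or.inr (Or.inl (by linear_combination hq.eq_zero_of_map_eq_zero h))
  · exact Or.inl (by linear_combination -hq.eq_zero_of_map_eq_zero h)
  · exact Or.inr (Or.inr h)

theorem exists_map_eq_and_map_one_add_eq {z : K} (hz : q z = t) :
    ∃ w, q w = t ∧ q (1 + w) = -1 ∧ q (1 - w) = -t := by
  have hsum : q (1 + z) + q (1 - z) = -1 - t := by
    rw [hq.map_one_add_add_map_one_sub_eq, hz]
  rcases add_eq_neg_one_sub_cases ht (hV _) (hV _) hsum with h | ⟨h₁, h₂⟩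
  · exact ⟨z, hz, h⟩
  · exact ⟨-z, by rw [hq.map_neg, hz], by rwa [← sub_eq_add_neg], by rwa [sub_neg_eq_add]⟩

theorem mul_self_eq_neg_one (htt : t * t = 1 ∨ t * t = -1) {z : K} (hz : q z = t) :
    t * t = -1 := by
  refine htt.resolve_left fun htt ↦ ?_
  obtain ⟨w, hw, hw₁, hw₂⟩ := exists_map_eq_and_map_one_add_eq hq ht hV hz
  have hc : q (w * w) = 1 := by rw [hq.map_mul, hw, htt]
  have h1c : q (1 - w * w) = t := by
    rw [show 1 - w * w = (1 + w) * (1 - w) by ring, hq.map_mul, hw₁, hw₂, neg_one_mul, neg_neg]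
  obtain ⟨ht0, ht1, htm1⟩ : t ≠ 0 ∧ t ≠ 1 ∧ t ≠ -1 := by simpa [not_or] using ht
  rcases eq_one_or_eq_neg_one_or_of_map_eq_one hq ht hV hc with h | h | ⟨-, h⟩
  · rw [h, sub_self, hq.map_zero] at h1c
    exact ht0 h1c.symm
  · rw [h, sub_neg_eq_add, one_add_one_eq_two, hq.map_two] at h1c
    exact ht1 h1c.symm
  · exact htm1 (h1c ▸ h)

theorem pow_sixteen_eq_one (htt : t * t = -1) {a : K} (ha : a ≠ 0) : a ^ 16 = 1 := by
  have : Nontrivial A := CharP.nontrivial_of_char_ne_one (by norm_num : 3 ≠ 1)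
  have h4 : q (a ^ 4) = 1 := by
    have hqa := hV a
    simp only [Set.mem_insert_iff, Set.mem_singleton_iff] at hqa
    rw [hq.map_pow]
    rcases hqa with h | h | h | h | h <;> rw [h]
    · exact absurd (hq.eq_zero_of_map_eq_zero h) ha
    · norm_num
    · norm_num
    · linear_combination (t * t - 1) * htt
    · linear_combination (t * t - 1) * htt
  rcases eq_one_or_eq_neg_one_or_of_map_eq_one hq ht hV h4 with h | h | ⟨h₁, h₂⟩
  · rw [show a ^ 16 = (a ^ 4) ^ 4 by ring, h, one_pow]
  · rw [show a ^ 16 = (a ^ 4) ^ 4 by ring, h]; norm_num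
  have hc : q (a ^ 4 * a ^ 4) = 1 := by rw [hq.map_mul, h4, one_mul]
  have h1c : q (1 - a ^ 4 * a ^ 4) = 1 := by
    rw [show 1 - a ^ 4 * a ^ 4 = (1 + a ^ 4) * (1 - a ^ 4) by ring, hq.map_mul, h₁, h₂]
    norm_num
  rcases eq_one_or_eq_neg_one_or_of_map_eq_one hq ht hV hc with h | h | ⟨-, h⟩
  · rw [show a ^ 16 = (a ^ 4 * a ^ 4) ^ 2 by ring, h, one_pow]
  · rw [show a ^ 16 = (a ^ 4 * a ^ 4) ^ 2 by ring, h]; norm_num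
  · have h2 : (1 : A) = 0 := by linear_combination -(h1c.symm.trans h) + CharP.cast_eq_zero A 3
    exact absurd h2 one_ne_zero

end Values

theorem charP_three {K L : Type*} [DivisionRing K] [Ring L] [CharP L 3] {q : K → L}
    (hq : IsMultiplicativeQuadraticMap q) : CharP K 3 := by
  have : Nontrivial L := CharP.nontrivial_of_char_ne_one (by norm_num : 3 ≠ 1)
  refine (CharP.charP_iff_prime_eq_zero Nat.prime_three).mpr (hq.eq_zero_of_map_eq_zero ?_)
  have h := hq.map_int 3
  push_cast at h ⊢
  rw [h, CharP.ofNat_eq_zero L 3, zero_pow two_ne_zero]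

end IsMultiplicativeQuadraticMap

theorem FiniteField.natCard_eq_nine {K : Type*} [Field K] [CharP K 3]
    (h16 : ∀ a : K, a ≠ 0 → a ^ 16 = 1) {a₀ : K} (ha₀ : a₀ ∉ ({0, 1, -1} : Set K)) :
    Nat.card K = 9 := by
  have : Finite K := by
    refine Set.finite_univ_iff.mp ((Polynomial.finite_setOfPred_isRoot
      (FiniteField.X_pow_card_sub_X_ne_zero K (by norm_num : 1 < 17))).subset fun a _ ↦ ?_)
    by_cases ha : a = 0
    · simp [ha]
    · simp [show a ^ 17 = a ^ 16 * a by ring, h16 a ha]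
  have : Fintype K := Fintype.ofFinite K
  have hdvd : Nat.card K - 1 ∣ 16 := by
    rw [← Nat.card_units, ← IsCyclic.exponent_eq_card]
    exact Monoid.exponent_dvd_of_forall_pow_eq_one fun g ↦
      Units.ext (by simpa using h16 g g.ne_zero)
  have h3 : 3 ∣ Nat.card K := by
    obtain ⟨n, -, hn⟩ := FiniteField.card K 3
    rw [Nat.card_eq_fintype_card, hn]
    exact dvd_pow_self 3 n.ne_zero
  have hne : Nat.card K ≠ 3 := by
    intro hK
    have h := FiniteField.pow_card a₀
    rw [← Nat.card_eq_fintype_card, hK] at h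
    have : a₀ * ((a₀ - 1) * (a₀ + 1)) = 0 := by linear_combination h
    simp only [Set.mem_insert_iff, Set.mem_singleton_iff, not_or] at ha₀
    rcases mul_eq_zero.mp this with h | h
    · exact ha₀.1 h
    rcases mul_eq_zero.mp h with h | h
    · exact ha₀.2.1 (sub_eq_zero.mp h)
    · exact ha₀.2.2 (eq_neg_of_add_eq_zero_left h)
  have hle : Nat.card K ≤ 17 := by have := Nat.le_of_dvd (by norm_num) hdvd; omega
  have hpos : 0 < Nat.card K := Nat.card_pos
  interval_cases h : Nat.card K <;> simp_all

open scoped IsMulCommutative in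
theorem IsMultiplicativeQuadraticMap.natCard_eq_nine_and_mul_self_eq_neg_one
    {K L : Type*} [Field K] [Ring L] [CharP L 3] {q : K → L}
    (hq : IsMultiplicativeQuadraticMap q) {a₀ : K} (ht : q a₀ ∉ ({0, 1, -1} : Set L))
    (hval : ∀ a, q a ∈ ({0, 1, -1} : Set L) ∨ q a * q a₀ ∈ ({0, 1, -1} : Set L)) :
    Nat.card K = 9 ∧ q a₀ * q a₀ = -1 ∧ ∀ a, q a ∈ ({0, 1, -1, q a₀, -q a₀} : Set L) := by
  -- The values of `q` commute, so we may compute in the commutative ring they generate.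
  have := Subring.isMulCommutative_closure (s := Set.range q) <| by
    rintro _ ⟨a, rfl⟩ _ ⟨b, rfl⟩
    exact (hq.commute a b).eq
  let q' : K → Subring.closure (Set.range q) :=
    fun a ↦ ⟨q a, Subring.subset_closure (Set.mem_range_self a)⟩
  have hq' : IsMultiplicativeQuadraticMap q' := hq.subringCodRestrict _ _
  simp only [Set.mem_insert_iff, Set.mem_singleton_iff] at ht hval ⊢
  have ht' : q' a₀ ∉ ({0, 1, -1} : Set _) := by simpa [q', Subtype.ext_iff] using ht
  obtain ⟨htt, hV⟩ := hq'.mul_self_mem_and_mem_of_mem_or_mul_mem ht'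
    (by simpa [q', Subtype.ext_iff] using hval)
  have htt' := hq'.mul_self_eq_neg_one ht' hV htt rfl
  have : CharP K 3 := hq.charP_three
  have ha₀ : a₀ ∉ ({0, 1, -1} : Set K) := by
    rintro (rfl | rfl | rfl) <;> simp [hq.map_zero, hq.map_one, hq.map_neg_one] at ht
  exact ⟨FiniteField.natCard_eq_nine (fun a ↦ hq'.pow_sixteen_eq_one ht' hV htt') ha₀,
    congrArg Subtype.val htt', fun a ↦ by simpa [q', Subtype.ext_iff] using hV a⟩

theorem AdjoinRoot.natCard_eq_pow_natDegree {F : Type*} [Field F] {f : F[X]} (hf : f ≠ 0) :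
    Nat.card (AdjoinRoot f) = Nat.card F ^ f.natDegree := by
  let pb := AdjoinRoot.powerBasis hf
  have : Module.Finite F (AdjoinRoot f) := pb.finite
  rw [Module.natCard_eq_pow_finrank (K := F), pb.finrank, AdjoinRoot.powerBasis_dim]

theorem Subring.nonempty_closure_singleton_ringEquiv_galoisField {p n : ℕ} [Fact p.Prime]
    {f : (ZMod p)[X]} [Fact (Irreducible f)] {A : Type*} [Ring A] [Algebra (ZMod p) A]
    [Nontrivial A] (hf : f.natDegree = n) {t : A} (ht : aeval t f = 0) :
    Nonempty (Subring.closure {t} ≃+* GaloisField p n) := by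
  let φ : AdjoinRoot f →ₐ[ZMod p] A := Ideal.Quotient.liftₐ _ (aeval t) fun g hg ↦ by
    obtain ⟨g, rfl⟩ := Ideal.mem_span_singleton'.mp hg
    rw [map_mul, ht, mul_zero]
  have hrange : φ.range.toSubring = Subring.closure {t} := by
    have hroot : φ (AdjoinRoot.root f) = t := (Ideal.Quotient.lift_mk _ _ _).trans (aeval_X t)
    have hbase : Set.range (algebraMap (ZMod p) A) ⊆ Subring.closure {t} := by
      rintro _ ⟨c, rfl⟩
      rw [← ZMod.natCast_zmod_val c, map_natCast]
      exact natCast_mem _ _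
    rw [← Algebra.map_top, ← AdjoinRoot.adjoinRoot_eq_top, AlgHom.map_adjoin, Set.image_singleton,
      hroot, Algebra.adjoin_eq_ring_closure, Subring.closure_union,
      sup_eq_right.mpr (Subring.closure_le.mpr hbase)]
  have hcard : Nat.card (AdjoinRoot f) = p ^ n := by
    rw [AdjoinRoot.natCard_eq_pow_natDegree (Fact.out : Irreducible f).ne_zero, Nat.card_zmod, hf]
  exact ⟨(RingEquiv.subringCongr hrange.symm).trans
    ((AlgEquiv.ofInjective φ φ.toRingHom.injective).symm.toRingEquiv.trans
      (GaloisField.algEquivGaloisField p n hcard).toRingEquiv)⟩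

theorem Subring.closure_range_eq_closure_singleton {K L : Type*} [Ring L] {q : K → L} {t : L}
    (ht : t ∈ Set.range q) (hV : ∀ a, q a ∈ ({0, 1, -1, t, -t} : Set L)) :
    Subring.closure (Set.range q) = Subring.closure {t} := by
  refine le_antisymm (Subring.closure_le.mpr ?_)
    (Subring.closure_mono (Set.singleton_subset_iff.mpr ht))
  rintro _ ⟨a, rfl⟩
  have ht' : t ∈ Subring.closure {t} := Subring.subset_closure rfl
  rcases hV a with h | h | h | h | h <;> rw [h]
  · exact zero_mem _
  · exact one_mem _
  · exact neg_mem (one_mem _)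
  · exact ht'
  · exact neg_mem ht'

theorem commute_mul_of_anticommute {L : Type*} [Ring L] {x y u : L} (hx : x * u = -(u * x))
    (hy : y * u = -(u * y)) : Commute (x * y) u := by
  rw [Commute, SemiconjBy, mul_assoc, hy, mul_neg, ← mul_assoc, hx, neg_mul, neg_neg, mul_assoc]

theorem mul_eq_neg_mul_of_mul_mul_eq_neg {L : Type*} [Ring L] {x x' u : L} (hx : x' * x = 1)
    (hw : x * u * x' = -u) : x * u = -(u * x) := by
  rw [← neg_mul, ← hw, mul_assoc _ x', hx, mul_one]

theorem conj_mul_conj_eq_neg_one {L : Type*} [Ring L] {x x' u : L} (hx : x' * x = 1)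
    (hx' : x * x' = 1) (hu : u * u = -1) : x * u * x' * (x * u * x') = -1 := by
  rw [show x * u * x' * (x * u * x') = x * u * (x' * x) * u * x' by simp only [mul_assoc], hx,
    mul_one, mul_assoc x u u, hu, mul_neg_one, neg_mul, hx']

theorem mul_eq_mul_of_mul_mul_eq {L : Type*} [Ring L] {x x' u w : L} (hx : x' * x = 1)
    (hw : x * u * x' = w) : x * u = w * x := by
  rw [← hw, mul_assoc _ x', hx, mul_one]

theorem Algebra.eq_lmul_apply_one_of_commute {F L : Type*} [CommSemiring F] [CommSemiring L]
    [Algebra F L] {v : L} (hv : Algebra.adjoin F {v} = ⊤) {x : Module.End F L}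
    (hx : Commute x (Algebra.lmul F L v)) : x = Algebra.lmul F L (x 1) := by
  ext w
  have hw : Algebra.lmul F L w ∈ Algebra.adjoin F {Algebra.lmul F L v} := by
    rw [← Set.image_singleton, ← AlgHom.map_adjoin, hv]
    exact ⟨w, trivial, rfl⟩
  have hcomm := Algebra.commute_of_mem_adjoin_of_forall_mem_commute hw
    (by rintro _ rfl; exact hx)
  calc x w = x (Algebra.lmul F L w 1) := by simp
    _ = Algebra.lmul F L w (x 1) := congrArg (· 1) hcomm.eq
    _ = Algebra.lmul F L (x 1) w := by simp [mul_comm]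

theorem Algebra.adjoin_singleton_eq_top_of_finrank_prime {F L : Type*} [Field F] [Field L]
    [Algebra F L] (hp : (Module.finrank F L).Prime) {v : L} (hv : v ∉ (⊥ : Subalgebra F L)) :
    Algebra.adjoin F {v} = ⊤ :=
  ((Subalgebra.isSimpleOrder_of_finrank_prime F L hp).eq_bot_or_eq_top _).resolve_left
    fun h ↦ hv (h ▸ Algebra.self_mem_adjoin_singleton F v)

local notation "F₉" => GaloisField 3 2
local notation "E₉" => Module.End (ZMod 3) (GaloisField 3 2)

theorem mem_range_iota_of_commute {v : F₉} (hv : v ∉ (⊥ : Subalgebra (ZMod 3) F₉)) {x : E₉}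
    (hx : Commute x (iota v)) : x ∈ Set.range iota :=
  ⟨x 1, (Algebra.eq_lmul_apply_one_of_commute (Algebra.adjoin_singleton_eq_top_of_finrank_prime
    (by rw [GaloisField.finrank 3 two_ne_zero]; exact Nat.prime_two) hv) hx).symm⟩

theorem mem_of_commute_iota_of_commute {v : F₉} (hv : v ∉ (⊥ : Subalgebra (ZMod 3) F₉)) {t x : E₉}
    (ht : t ∉ Set.range iota) (hxv : Commute x (iota v)) (hxt : Commute x t) :
    x ∈ ({0, 1, -1} : Set E₉) := by
  obtain ⟨w, rfl⟩ := mem_range_iota_of_commute hv hxv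
  by_cases hw : w ∈ (⊥ : Subalgebra (ZMod 3) F₉)
  · obtain ⟨c, rfl⟩ := Algebra.mem_bot.mp hw
    rw [AlgHom.commutes]
    rcases (by decide : ∀ c : ZMod 3, c = 0 ∨ c = 1 ∨ c = -1) c with rfl | rfl | rfl <;> simp
  · exact absurd (mem_range_iota_of_commute hw hxt.symm) ht

theorem GaloisField.exists_pow_four_eq_neg_one : ∃ y : F₉, y ^ 4 = -1 := by
  classical
  have : Fintype F₉ := Fintype.ofFinite _
  have hcard : Fintype.card F₉ = 9 := by
    rw [Fintype.card_eq_nat_card, GaloisField.card 3 2 two_ne_zero]; norm_num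
  obtain ⟨i, hi⟩ := FiniteField.isSquare_neg_one_iff.mpr (by rw [hcard]; norm_num)
  have hi0 : i ≠ 0 := by rintro rfl; simp at hi
  obtain ⟨y, rfl⟩ := (FiniteField.isSquare_iff (by rw [ringChar.eq F₉ 3]; norm_num) hi0).mpr
    (by rw [hcard]; norm_num; linear_combination (1 - i * i) * hi)
  exact ⟨y, by rw [hi]; ring⟩

theorem iota_injective : Function.Injective iota := Algebra.lmul_injective

theorem sq_notMem_bot_of_pow_four_eq_neg_one {y : F₉} (hy : y ^ 4 = -1) :
    y ^ 2 ∉ (⊥ : Subalgebra (ZMod 3) F₉) := by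
  intro hy2
  obtain ⟨c, hc⟩ := Algebra.mem_bot.mp hy2
  have h : algebraMap (ZMod 3) F₉ (c ^ 2) = algebraMap (ZMod 3) F₉ (-1) := by
    rw [map_pow, hc, map_neg, map_one, ← pow_mul, hy]
  exact (by decide : ∀ c : ZMod 3, c ^ 2 ≠ -1) c ((algebraMap (ZMod 3) F₉).injective h)

theorem IsMultiplicativeQuadraticMap.commute_or_anticommute {K : Type*} [Field K] {q : K → E₉}
    (hq : IsMultiplicativeQuadraticMap q)
    (hnorm₁ : ∀ a : K, a ≠ 0 → ∀ y : F₉, y ≠ 0 →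
      ∃ z : F₉, z ≠ 0 ∧ q a * iota (y ^ 2) * q a⁻¹ = iota (z ^ 2))
    {y : F₉} (hy : y ^ 4 = -1) {a : K} (ha : a ≠ 0) :
    Commute (q a) (iota (y ^ 2)) ∨ q a * iota (y ^ 2) = -(iota (y ^ 2) * q a) := by
  obtain ⟨z, -, hz⟩ := hnorm₁ a ha y (by rintro rfl; norm_num at hy)
  have hu : iota (y ^ 2) * iota (y ^ 2) = -1 := by
    rw [← _root_.map_mul, ← pow_two, ← pow_mul, hy, _root_.map_neg, _root_.map_one]
  have hz4 : (z ^ 2) ^ 2 = (y ^ 2) ^ 2 := by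
    apply iota_injective
    rw [_root_.map_pow iota (z ^ 2), _root_.map_pow iota (y ^ 2), ← hz, pow_two,
      pow_two (iota _), hu, conj_mul_conj_eq_neg_one (hq.map_inv_mul_map ha) (hq.map_mul_map_inv ha) hu]
  rcases sq_eq_sq_iff_eq_or_eq_neg.mp hz4 with h | h
  · exact Or.inl (mul_eq_mul_of_mul_mul_eq (hq.map_inv_mul_map ha) (h ▸ hz))
  · rw [h, _root_.map_neg] at hz
    exact Or.inr (mul_eq_neg_mul_of_mul_mul_eq_neg (hq.map_inv_mul_map ha) hz)

theorem IsMultiplicativeQuadraticMap.map_mem_or_mul_map_mem {K : Type*} [Field K] {q : K → E₉}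
    (hq : IsMultiplicativeQuadraticMap q)
    (hnorm₁ : ∀ a : K, a ≠ 0 → ∀ y : F₉, y ≠ 0 →
      ∃ z : F₉, z ≠ 0 ∧ q a * iota (y ^ 2) * q a⁻¹ = iota (z ^ 2))
    {a₀ : K} (ha₀ : q a₀ ∉ Set.range iota) (a : K) :
    q a ∈ ({0, 1, -1} : Set E₉) ∨ q a * q a₀ ∈ ({0, 1, -1} : Set E₉) := by
  obtain ⟨y, hy⟩ := GaloisField.exists_pow_four_eq_neg_one
  have hv := sq_notMem_bot_of_pow_four_eq_neg_one hy
  by_cases ha : a = 0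
  · exact Or.inl (by simp [ha, hq.map_zero])
  have ha₀0 : a₀ ≠ 0 := by
    rintro rfl
    exact ha₀ ⟨0, by rw [_root_.map_zero, hq.map_zero]⟩
  have hanti : q a₀ * iota (y ^ 2) = -(iota (y ^ 2) * q a₀) :=
    (hq.commute_or_anticommute hnorm₁ hy ha₀0).resolve_left
      fun h ↦ ha₀ (mem_range_iota_of_commute hv h)
  rcases hq.commute_or_anticommute hnorm₁ hy ha with h | h
  · exact Or.inl (mem_of_commute_iota_of_commute hv ha₀ h (hq.commute a a₀))
  · exact Or.inr (mem_of_commute_iota_of_commute hv ha₀ (commute_mul_of_anticommute h hanti)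
      ((hq.commute a a₀).mul_left (Commute.refl _)))

theorem irreducible_X_sq_add_one : Irreducible (X ^ 2 + 1 : (ZMod 3)[X]) := by
  refine Polynomial.irreducible_of_degree_le_three_of_not_isRoot ?_ fun x ↦ ?_
  · rw [show (X ^ 2 + 1 : (ZMod 3)[X]).natDegree = 2 by compute_degree!]
    decide
  · simp only [IsRoot, eval_add, eval_pow, eval_X, eval_one]
    fin_cases x <;> decide

theorem stmt_14_general {K : Type*} [Field K]
    (q : K → Module.End (ZMod 3) (GaloisField 3 2))
    (hq : IsMultiplicativeQuadraticMap q)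
    (hnorm₁ : ∀ a : K, a ≠ 0 → ∀ y : GaloisField 3 2, y ≠ 0 →
      ∃ z : GaloisField 3 2, z ≠ 0 ∧ q a * iota (y ^ 2) * q a⁻¹ = iota (z ^ 2))
    (hnotin : ¬ ∀ a : K, q a ∈ Set.range iota) :
    Nat.card K = 9 ∧
    Nonempty ((Subring.closure (Set.range q)) ≃+* GaloisField 3 2) := by
  obtain ⟨a₀, ha₀⟩ := not_forall.mp hnotin
  have : CharP E₉ 3 := charP_of_injective_algebraMap' (ZMod 3) 3
  have ht : q a₀ ∉ ({0, 1, -1} : Set E₉) := by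
    rintro (h | h | h) <;> rw [h] at ha₀
    exacts [ha₀ ⟨0, map_zero iota⟩, ha₀ ⟨1, map_one iota⟩, ha₀ ⟨-1, by rw [map_neg, map_one]⟩]
  obtain ⟨hcard, htt, hV⟩ :=
    hq.natCard_eq_nine_and_mul_self_eq_neg_one ht (hq.map_mem_or_mul_map_mem hnorm₁ ha₀)
  have : Fact (Irreducible (X ^ 2 + 1 : (ZMod 3)[X])) := ⟨irreducible_X_sq_add_one⟩
  refine ⟨hcard, ?_⟩
  rw [Subring.closure_range_eq_closure_singleton (Set.mem_range_self a₀) hV]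
  exact Subring.nonempty_closure_singleton_ringEquiv_galoisField (f := X ^ 2 + 1)
    (by compute_degree!) (by simp [sq, htt])

/-- Let `K` be a field and `q : K → End_{F₃}(F₉)` a multiplicative
quadratic map such that `q(K*)` and the group `(F₉*)²` of squares (with `F₉` embedded in
`End_{F₃}(F₉)` by multiplication) normalize each other.  If `q(K)` is not contained in
`F₉`, then `K` has order 9 and `q(K)` generates a subfield of `End_{F₃}(F₉)` isomorphic
to `F₉`. -/
theorem stmt_14 {K : Type*} [Field K]
    (q : K → Module.End (ZMod 3) (GaloisField 3 2))
    (hq : IsMultiplicativeQuadraticMap q)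
    (hnorm₁ : ∀ a : K, a ≠ 0 → ∀ y : GaloisField 3 2, y ≠ 0 →
      ∃ z : GaloisField 3 2, z ≠ 0 ∧ q a * iota (y ^ 2) * q a⁻¹ = iota (z ^ 2))
    (hnorm₂ : ∀ a : K, a ≠ 0 → ∀ y : GaloisField 3 2, y ≠ 0 →
      ∃ b : K, b ≠ 0 ∧ iota (y ^ 2) * q a * iota ((y⁻¹) ^ 2) = q b)
    (hnotin : ¬ ∀ a : K, q a ∈ Set.range iota) :
    Nat.card K = 9 ∧
    Nonempty ((Subring.closure (Set.range q)) ≃+* GaloisField 3 2) :=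
  stmt_14_general q hq hnorm₁ hnotin
end
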